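/- Let B = [B_1 | B_2 | ⋯ | B_D] ∈ ℝ^{k×(nD)} be the horizontal concatenation of matrices B_d ∈ ℝ^{k×n}, and fix r ≥ 1. Then the best rank-r approximation error of the concatenation dominates the sum of the blockwise best rank-r approximation errors: ∑_{d=1}^{D} (‖B_d‖_F² − ∑_{i=1}^r σ_i(B_d)²) ≤ ‖B‖_F² − ∑_{i=1}^r σ_i(B)². Equivalently, ∑_{d=1}^{D} ∑_{i=1}^r σ_i(B_d)² ≥ ∑_{i=1}^r σ_i(B)². -/

import Mathlib

open Matrix BigOperators Finset

/-- Squared Frobenius norm of a real matrix. -/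
noncomputable def frobSq {m n : ℕ} (A : Matrix (Fin m) (Fin n) ℝ) : ℝ :=
  ∑ i, ∑ j, (A i j) ^ 2

/-- Removed from Mathlib; restated here with its old statement. -/
theorem Matrix.isHermitian_transpose_mul_self {m n : Type*} [Fintype m]
    (A : Matrix m n ℝ) : (Aᵀ * A).IsHermitian := by
  simpa [Matrix.conjTranspose_eq_transpose_of_trivial] using
    Matrix.isHermitian_conjTranspose_mul_self A

/-- Squares of the singular values of `A`, in decreasing order, indexed by `ℕ`
(equal to `0` beyond the number of columns): the eigenvalues of `Aᵀ * A` sorted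
decreasingly. -/
noncomputable def sValSq {m n : ℕ} (A : Matrix (Fin m) (Fin n) ℝ) : ℕ → ℝ :=
  fun i =>
    if h : i < n then
      (Matrix.isHermitian_transpose_mul_self A).eigenvalues
        ((Tuple.sort (fun j => -(Matrix.isHermitian_transpose_mul_self A).eigenvalues j)) ⟨i, h⟩)
    else 0

/-- The `i`-th largest singular value (0-indexed) of a real matrix. -/
noncomputable def sVal {m n : ℕ} (A : Matrix (Fin m) (Fin n) ℝ) : ℕ → ℝ :=
  fun i => Real.sqrt (sValSq A i)

variable {k n : ℕ}

noncomputable def lam (X : Matrix (Fin k) (Fin n) ℝ) : Fin n → ℝ :=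
  (Matrix.isHermitian_transpose_mul_self X).eigenvalues

noncomputable def sig (X : Matrix (Fin k) (Fin n) ℝ) : Equiv.Perm (Fin n) :=
  Tuple.sort (fun j => -(lam X j))

noncomputable def ev (X : Matrix (Fin k) (Fin n) ℝ) (j : Fin n) : Fin n → ℝ :=
  ⇑((Matrix.isHermitian_transpose_mul_self X).eigenvectorBasis j)

lemma lam_nonneg (X : Matrix (Fin k) (Fin n) ℝ) (j : Fin n) : 0 ≤ lam X j :=
  Matrix.eigenvalues_conjTranspose_mul_self_nonneg X j

lemma sValSq_eq (X : Matrix (Fin k) (Fin n) ℝ) (i : ℕ) (h : i < n) :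
    sValSq X i = lam X (sig X ⟨i, h⟩) := by
  simp [sValSq, lam, sig, h]

lemma sValSq_eq_zero (X : Matrix (Fin k) (Fin n) ℝ) (i : ℕ) (h : ¬ i < n) :
    sValSq X i = 0 := by
  simp [sValSq, h]

lemma sValSq_nonneg (X : Matrix (Fin k) (Fin n) ℝ) (i : ℕ) : 0 ≤ sValSq X i := by
  by_cases h : i < n
  · rw [sValSq_eq X i h]; exact lam_nonneg X _
  · rw [sValSq_eq_zero X i h]

lemma lam_sig_anti (X : Matrix (Fin k) (Fin n) ℝ) {i j : Fin n} (h : i ≤ j) :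
    lam X (sig X j) ≤ lam X (sig X i) := by
  have := Tuple.monotone_sort (fun j => -(lam X j)) h
  simpa [sig] using this

lemma ev_dot (X : Matrix (Fin k) (Fin n) ℝ) (a b : Fin n) :
    ev X a ⬝ᵥ ev X b = if a = b then 1 else 0 := by
  have h := (Matrix.isHermitian_transpose_mul_self X).eigenvectorBasis.orthonormal
  rw [orthonormal_iff_ite] at h
  have := h a b
  simpa [ev, dotProduct, PiLp.inner_apply, RCLike.inner_apply, mul_comm] using this

lemma mulVec_ev (X : Matrix (Fin k) (Fin n) ℝ) (j : Fin n) :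
    (Xᵀ * X) *ᵥ ev X j = lam X j • ev X j := by
  have := (Matrix.isHermitian_transpose_mul_self X).mulVec_eigenvectorBasis j
  simpa [ev, lam, Matrix.conjTranspose] using this

lemma mulVec_dot (X : Matrix (Fin k) (Fin n) ℝ) (u w : Fin n → ℝ) :
    (X *ᵥ u) ⬝ᵥ (X *ᵥ w) = u ⬝ᵥ ((Xᵀ * X) *ᵥ w) := by
  rw [← Matrix.mulVec_mulVec, Matrix.mulVec_transpose, dotProduct_comm u,
    ← Matrix.dotProduct_mulVec, dotProduct_comm]

lemma y_dot (X : Matrix (Fin k) (Fin n) ℝ) (a b : Fin n) :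
    (X *ᵥ ev X a) ⬝ᵥ (X *ᵥ ev X b) = if a = b then lam X a else 0 := by
  rw [mulVec_dot, mulVec_ev, dotProduct_smul, smul_eq_mul, ev_dot]
  by_cases h : a = b <;> simp [h]

noncomputable def colSq (X : Matrix (Fin k) (Fin n) ℝ) (u : Fin k → ℝ) : ℝ :=
  ∑ j, (∑ i, X i j * u i) ^ 2

lemma colSq_eq (X : Matrix (Fin k) (Fin n) ℝ) (u : Fin k → ℝ) :
    colSq X u = (Xᵀ *ᵥ u) ⬝ᵥ (Xᵀ *ᵥ u) := by
  simp [colSq, dotProduct, Matrix.mulVec, Matrix.transpose_apply, pow_two]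

lemma parseval (X : Matrix (Fin k) (Fin n) ℝ) (z : Fin n → ℝ) :
    z ⬝ᵥ z = ∑ j, (z ⬝ᵥ ev X j) ^ 2 := by
  have h := ((Matrix.isHermitian_transpose_mul_self X).eigenvectorBasis).sum_inner_mul_inner
    (WithLp.toLp 2 z) (WithLp.toLp 2 z)
  have h2 : ∀ j : Fin n,
      (inner ℝ (WithLp.toLp 2 z)
        ((Matrix.isHermitian_transpose_mul_self X).eigenvectorBasis j) : ℝ)
        * inner ℝ ((Matrix.isHermitian_transpose_mul_self X).eigenvectorBasis j)
          (WithLp.toLp 2 z) = (z ⬝ᵥ ev X j) ^ 2 := by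
    intro j
    simp [PiLp.inner_apply, RCLike.inner_apply, ev, dotProduct, pow_two, mul_comm]
  rw [Finset.sum_congr rfl (fun j _ => h2 j)] at h
  rw [h]
  simp [PiLp.inner_apply, RCLike.inner_apply, dotProduct]
  rw [EuclideanSpace.norm_sq_eq]
  simp [Real.norm_eq_abs, sq_abs, pow_two]

lemma dot_swap (X : Matrix (Fin k) (Fin n) ℝ) (u : Fin k → ℝ) (v : Fin n → ℝ) :
    (Xᵀ *ᵥ u) ⬝ᵥ v = u ⬝ᵥ (X *ᵥ v) := by
  rw [Matrix.mulVec_transpose, ← Matrix.dotProduct_mulVec]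


-- Bessel-type inequality for an "orthonormal-or-zero" family
lemma bessel {k s : ℕ} (w : Fin s → Fin k → ℝ) (ε : Fin s → ℝ)
    (hε : ∀ a, ε a = 0 ∨ ε a = 1)
    (hw : ∀ a b, w a ⬝ᵥ w b = if a = b then ε a else 0)
    (x : Fin k → ℝ) : ∑ a, (w a ⬝ᵥ x) ^ 2 ≤ x ⬝ᵥ x := by
  classical
  set c : Fin s → ℝ := fun a => w a ⬝ᵥ x with hc
  set p : Fin k → ℝ := fun i => ∑ a, c a * w a i with hp
  have hpx : ∑ i, p i * x i = ∑ a, c a ^ 2 := by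
    simp only [hp, Finset.sum_mul]
    rw [Finset.sum_comm]
    refine Finset.sum_congr rfl fun a _ => ?_
    simp only [hc, dotProduct, Finset.mul_sum, pow_two]
    exact Finset.sum_congr rfl fun i _ => by ring
  have hpp : ∑ i, p i * p i ≤ ∑ a, c a ^ 2 := by
    have : ∑ i, p i * p i = ∑ a, ∑ b, c a * c b * (w a ⬝ᵥ w b) := by
      simp only [hp, Finset.sum_mul, Finset.mul_sum, dotProduct]
      rw [Finset.sum_comm]
      refine Finset.sum_congr rfl fun a _ => ?_
      rw [Finset.sum_comm]
      refine Finset.sum_congr rfl fun b _ => ?_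
      exact Finset.sum_congr rfl fun i _ => by ring
    rw [this]
    have : ∀ a, ∑ b, c a * c b * (w a ⬝ᵥ w b) = c a ^ 2 * ε a := by
      intro a
      rw [Finset.sum_eq_single a]
      · rw [hw a a, if_pos rfl]; ring
      · intro b _ hb; rw [hw a b, if_neg (Ne.symm hb), mul_zero]
      · intro h; exact absurd (Finset.mem_univ a) h
    rw [Finset.sum_congr rfl fun a _ => this a]
    refine Finset.sum_le_sum fun a _ => ?_
    rcases hε a with h | h <;> rw [h] <;> nlinarith [sq_nonneg (c a)]
  have hnn : 0 ≤ ∑ i, (x i - p i) ^ 2 := Finset.sum_nonneg fun i _ => sq_nonneg _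
  have hexp : ∑ i, (x i - p i) ^ 2 =
      ∑ i, x i * x i - 2 * ∑ i, p i * x i + ∑ i, p i * p i := by
    have : ∑ i, (x i - p i) ^ 2 = ∑ i, (x i * x i - 2 * (p i * x i) + p i * p i) :=
      Finset.sum_congr rfl fun i _ => by ring
    rw [this, Finset.sum_add_distrib, Finset.sum_sub_distrib, ← Finset.mul_sum]
  have hxx : x ⬝ᵥ x = ∑ i, x i * x i := rfl
  rw [hxx]
  have hca : ∑ a, (w a ⬝ᵥ x) ^ 2 = ∑ a, c a ^ 2 := rfl
  rw [hca]
  linarith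


lemma key_sum (n r : ℕ) (μ c : ℕ → ℝ)
    (hμ0 : ∀ i, i < n → 0 ≤ μ i)
    (hanti : ∀ i j, i ≤ j → j < n → μ j ≤ μ i)
    (hc0 : ∀ i, i < n → 0 ≤ c i)
    (hc1 : ∀ i, i < n → c i ≤ 1)
    (hcr : ∑ i ∈ range n, c i ≤ r) :
    ∑ i ∈ range n, μ i * c i ≤ ∑ i ∈ range (min r n), μ i := by
  rcases le_or_gt n r with h | h
  · rw [min_eq_right h]
    refine Finset.sum_le_sum fun i hi => ?_
    have hi' := Finset.mem_range.mp hi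
    nlinarith [hμ0 i hi', hc0 i hi', hc1 i hi']
  · rw [min_eq_left h.le]
    have hsplit : ∑ i ∈ Finset.Ico 0 r, μ i * c i + ∑ i ∈ Finset.Ico r n, μ i * c i
        = ∑ i ∈ Finset.Ico 0 n, μ i * c i :=
      Finset.sum_Ico_consecutive _ (Nat.zero_le r) h.le
    have hsplitc : ∑ i ∈ Finset.Ico 0 r, c i + ∑ i ∈ Finset.Ico r n, c i
        = ∑ i ∈ Finset.Ico 0 n, c i :=
      Finset.sum_Ico_consecutive _ (Nat.zero_le r) h.le
    rw [← Nat.Ico_zero_eq_range] at *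
    -- bound the tail
    have htail : ∑ i ∈ Finset.Ico r n, μ i * c i ≤ μ r * ∑ i ∈ Finset.Ico r n, c i := by
      rw [Finset.mul_sum]
      refine Finset.sum_le_sum fun i hi => ?_
      obtain ⟨h1, h2⟩ := Finset.mem_Ico.mp hi
      exact mul_le_mul_of_nonneg_right (hanti r i h1 h2) (hc0 i h2)
    have hμr : 0 ≤ μ r := hμ0 r h
    have htail2 : μ r * ∑ i ∈ Finset.Ico r n, c i ≤ μ r * (r - ∑ i ∈ Finset.Ico 0 r, c i) := by
      apply mul_le_mul_of_nonneg_left _ hμr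
      linarith
    have hhead : μ r * ((r : ℝ) - ∑ i ∈ Finset.Ico 0 r, c i)
        ≤ ∑ i ∈ Finset.Ico 0 r, (μ i - μ i * c i) := by
      have : μ r * ((r : ℝ) - ∑ i ∈ Finset.Ico 0 r, c i)
          = ∑ i ∈ Finset.Ico 0 r, μ r * (1 - c i) := by
        have h1 : ∑ i ∈ Finset.Ico 0 r, μ r * (1 - c i)
            = ∑ i ∈ Finset.Ico 0 r, (μ r - μ r * c i) :=
          Finset.sum_congr rfl fun i _ => by ring
        rw [h1, Finset.sum_sub_distrib, Finset.sum_const, Nat.card_Ico, Nat.sub_zero,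
          nsmul_eq_mul, ← Finset.mul_sum]
        ring
      rw [this]
      refine Finset.sum_le_sum fun i hi => ?_
      obtain ⟨_, h2⟩ := Finset.mem_Ico.mp hi
      have h2' : i < n := h2.trans h
      have := hanti i r (h2.le) h
      have := hc1 i h2'
      nlinarith
    have : ∑ i ∈ Finset.Ico 0 r, (μ i - μ i * c i)
        = ∑ i ∈ Finset.Ico 0 r, μ i - ∑ i ∈ Finset.Ico 0 r, μ i * c i :=
      Finset.sum_sub_distrib _ _
    simp only [Nat.Ico_zero_eq_range] at *
    linarith


lemma kyfan_upper (X : Matrix (Fin k) (Fin n) ℝ) {r : ℕ} (u : Fin r → Fin k → ℝ)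
    (δ : Fin r → ℝ) (hδ : ∀ a, δ a = 0 ∨ δ a = 1)
    (hu : ∀ a b, u a ⬝ᵥ u b = if a = b then δ a else 0) :
    ∑ a, colSq X (u a) ≤ ∑ i ∈ Finset.range r, sValSq X i := by
  classical
  set yh : Fin n → Fin k → ℝ :=
    fun j => if lam X j = 0 then 0 else (Real.sqrt (lam X j))⁻¹ • (X *ᵥ ev X j) with hyh
  set ε : Fin n → ℝ := fun j => if lam X j = 0 then 0 else 1 with hε
  have hεi : ∀ j, ε j = 0 ∨ ε j = 1 := by
    intro j; by_cases h : lam X j = 0 <;> simp [hε, h]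
  have hy0 : ∀ j, lam X j = 0 → X *ᵥ ev X j = 0 := by
    intro j hj
    have h := y_dot X j j
    rw [if_pos rfl, hj] at h
    exact (dotProduct_self_eq_zero).mp h
  have hsq : ∀ j, Real.sqrt (lam X j) * Real.sqrt (lam X j) = lam X j := by
    intro j; exact Real.mul_self_sqrt (lam_nonneg X j)
  have hy_eq : ∀ j, X *ᵥ ev X j = Real.sqrt (lam X j) • yh j := by
    intro j
    by_cases hj : lam X j = 0
    · simp [hyh, hj, hy0 j hj]
    · have hpos : 0 < lam X j := lt_of_le_of_ne (lam_nonneg X j) (Ne.symm hj)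
      have hs : Real.sqrt (lam X j) ≠ 0 := by positivity
      simp only [hyh, if_neg hj, smul_smul]
      rw [mul_inv_cancel₀ hs, one_smul]
  have hyh_dot : ∀ a b, yh a ⬝ᵥ yh b = if a = b then ε a else 0 := by
    intro a b
    by_cases ha : lam X a = 0
    · simp [hyh, hε, ha, zero_dotProduct]
    · by_cases hb : lam X b = 0
      · have hab : a ≠ b := fun h => ha (h ▸ hb)
        simp [hyh, hε, ha, hb, hab, dotProduct_zero]
      · simp only [hyh, hε, if_neg ha, if_neg hb, smul_dotProduct,
          dotProduct_smul, smul_eq_mul, y_dot]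
        by_cases hab : a = b
        · subst hab
          have hpos : 0 < lam X a := lt_of_le_of_ne (lam_nonneg X a) (Ne.symm ha)
          have hs : Real.sqrt (lam X a) ≠ 0 := by positivity
          rw [if_pos rfl, if_pos rfl]
          field_simp
          exact (Real.sq_sqrt (lam_nonneg X a)).symm
        · rw [if_neg hab, if_neg hab]; ring
  set d : Fin n → ℝ := fun j => ∑ a, (yh j ⬝ᵥ u a) ^ 2 with hd
  have h1 : ∀ a, colSq X (u a) = ∑ j, lam X j * (yh j ⬝ᵥ u a) ^ 2 := by
    intro a
    rw [colSq_eq, parseval X]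
    refine Finset.sum_congr rfl fun j _ => ?_
    rw [dot_swap, hy_eq j, dotProduct_smul, smul_eq_mul,
      dotProduct_comm]
    rw [mul_pow, pow_two (Real.sqrt (lam X j)), hsq]
  have h2 : ∑ a, colSq X (u a) = ∑ j, lam X j * d j := by
    rw [Finset.sum_congr rfl fun a _ => h1 a, Finset.sum_comm]
    exact Finset.sum_congr rfl fun j _ => by rw [hd, Finset.mul_sum]
  have hd0 : ∀ j, 0 ≤ d j := fun j => Finset.sum_nonneg fun a _ => sq_nonneg _
  have hd1 : ∀ j, d j ≤ 1 := by
    intro j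
    have hb := bessel u δ hδ hu (yh j)
    have he : d j = ∑ a, (u a ⬝ᵥ yh j) ^ 2 :=
      Finset.sum_congr rfl fun a _ => by rw [dotProduct_comm]
    have hyy : yh j ⬝ᵥ yh j ≤ 1 := by
      rw [hyh_dot j j, if_pos rfl]
      rcases hεi j with h | h <;> rw [h] <;> norm_num
    rw [he]; linarith
  have hdr : ∑ j, d j ≤ (r : ℝ) := by
    have hsw : ∑ j, d j = ∑ a, ∑ j, (yh j ⬝ᵥ u a) ^ 2 := Finset.sum_comm
    have hb : ∀ a, ∑ j, (yh j ⬝ᵥ u a) ^ 2 ≤ δ a := by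
      intro a
      have := bessel yh ε hεi hyh_dot (u a)
      rw [hu a a, if_pos rfl] at this
      exact this
    calc ∑ j, d j ≤ ∑ a : Fin r, δ a := by
          rw [hsw]; exact Finset.sum_le_sum fun a _ => hb a
      _ ≤ ∑ a : Fin r, (1 : ℝ) := Finset.sum_le_sum fun a _ => by
          rcases hδ a with h | h <;> rw [h] <;> norm_num
      _ = (r : ℝ) := by simp
  -- reindex by the sorting permutation and apply key_sum
  set μ : ℕ → ℝ := fun i => sValSq X i with hμ
  set c : ℕ → ℝ := fun i => if h : i < n then d (sig X ⟨i, h⟩) else 0 with hcdef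
  have h3 : ∑ j, lam X j * d j = ∑ i ∈ Finset.range n, μ i * c i := by
    rw [Finset.sum_range fun i => μ i * c i]
    rw [← Equiv.sum_comp (sig X) (fun j => lam X j * d j)]
    refine Finset.sum_congr rfl fun j _ => ?_
    have hj : (j : ℕ) < n := j.isLt
    simp only [hμ, hcdef, dif_pos hj, sValSq_eq X j hj]
  have hkey := key_sum n r μ c
    (fun i h => by rw [hμ]; exact sValSq_nonneg X i)
    (fun i j hij hj => by
      have hi : i < n := lt_of_le_of_lt hij hj
      simp only [hμ, sValSq_eq X i hi, sValSq_eq X j hj]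
      exact lam_sig_anti X (by exact Fin.mk_le_mk.mpr hij))
    (fun i h => by simp only [hcdef, dif_pos h]; exact hd0 _)
    (fun i h => by simp only [hcdef, dif_pos h]; exact hd1 _)
    (by
      have : ∑ i ∈ Finset.range n, c i = ∑ j, d j := by
        rw [Finset.sum_range fun i => c i]
        rw [← Equiv.sum_comp (sig X) d]
        refine Finset.sum_congr rfl fun j _ => ?_
        simp only [hcdef, dif_pos j.isLt]
      rw [this]; exact hdr)
  have h4 : ∑ i ∈ Finset.range (min r n), μ i = ∑ i ∈ Finset.range r, sValSq X i := by
    refine Finset.sum_subset (Finset.range_subset_range.mpr (min_le_left r n)) ?_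
    intro x hx hnx
    rw [Finset.mem_range] at hx hnx
    have : ¬ x < n := fun hxn => hnx (lt_min hx hxn)
    exact sValSq_eq_zero X x this
  rw [h2, h3]
  rw [← h4]
  exact hkey

lemma mulVec_y (X : Matrix (Fin k) (Fin n) ℝ) (j : Fin n) :
    Xᵀ *ᵥ (X *ᵥ ev X j) = lam X j • ev X j := by
  rw [Matrix.mulVec_mulVec, mulVec_ev]

lemma colSq_zero (X : Matrix (Fin k) (Fin n) ℝ) : colSq X 0 = 0 := by
  simp [colSq]

lemma attain (X : Matrix (Fin k) (Fin n) ℝ) (r : ℕ) :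
    ∃ (u : Fin r → Fin k → ℝ) (δ : Fin r → ℝ), (∀ a, δ a = 0 ∨ δ a = 1) ∧
      (∀ a b, u a ⬝ᵥ u b = if a = b then δ a else 0) ∧
      ∑ i ∈ Finset.range r, sValSq X i ≤ ∑ a, colSq X (u a) := by
  classical
  have hsq : ∀ j, Real.sqrt (lam X j) * Real.sqrt (lam X j) = lam X j :=
    fun j => Real.mul_self_sqrt (lam_nonneg X j)
  refine ⟨fun a => if h : (a : ℕ) < n then
      (if lam X (sig X ⟨a, h⟩) = 0 then 0
        else (Real.sqrt (lam X (sig X ⟨a, h⟩)))⁻¹ • (X *ᵥ ev X (sig X ⟨a, h⟩))) else 0,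
    fun a => if h : (a : ℕ) < n then (if lam X (sig X ⟨a, h⟩) = 0 then 0 else 1) else 0,
    ?_, ?_, ?_⟩
  · intro a
    by_cases h : (a : ℕ) < n
    · by_cases h0 : lam X (sig X ⟨a, h⟩) = 0 <;> simp [h, h0]
    · simp [h]
  · intro a b
    by_cases ha : (a : ℕ) < n
    · by_cases hb : (b : ℕ) < n
      · simp only [dif_pos ha, dif_pos hb]
        by_cases h0a : lam X (sig X ⟨a, ha⟩) = 0
        · by_cases hab : a = b
          · subst hab; simp [h0a]
          · simp [h0a, hab]
        · by_cases h0b : lam X (sig X ⟨b, hb⟩) = 0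
          · have hab : a ≠ b := by
              intro h; apply h0a; subst h; exact h0b
            simp [h0a, h0b, hab]
          · by_cases hab : a = b
            · subst hab
              simp only [if_neg h0a, if_pos rfl, smul_dotProduct,
                dotProduct_smul, smul_eq_mul, y_dot, if_pos rfl]
              have hpos : 0 < lam X (sig X ⟨a, ha⟩) :=
                lt_of_le_of_ne (lam_nonneg X _) (Ne.symm h0a)
              have hs : Real.sqrt (lam X (sig X ⟨a, ha⟩)) ≠ 0 := by positivity
              field_simp
              simp only [↓reduceIte, mul_one]
              exact (Real.sq_sqrt (lam_nonneg X _)).symm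
            · have hne : sig X ⟨a, ha⟩ ≠ sig X ⟨b, hb⟩ := by
                intro h
                apply hab
                have h2 := (sig X).injective h
                rw [Fin.mk.injEq] at h2
                exact Fin.ext h2
              simp only [if_neg h0a, if_neg h0b, smul_dotProduct,
                dotProduct_smul, smul_eq_mul, y_dot, if_neg hne, if_neg hab]
              ring
      · have hab : a ≠ b := by
          intro h; subst h; exact hb ha
        simp [dif_pos ha, dif_neg hb, hab]
    · by_cases hab : a = b
      · subst hab; simp [ha]
      · simp [dif_neg ha, hab]
  · rw [Finset.sum_range fun i => sValSq X i]
    refine Finset.sum_le_sum fun a _ => ?_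
    dsimp only
    by_cases h : (a : ℕ) < n
    · rw [sValSq_eq X a h, dif_pos h]
      by_cases h0 : lam X (sig X ⟨(a : ℕ), h⟩) = 0
      · rw [if_pos h0, colSq_zero]
        have : (⟨(a : ℕ), h⟩ : Fin n) = ⟨a, h⟩ := rfl
        rw [h0]
      · rw [if_neg h0]
        have hpos : 0 < lam X (sig X ⟨(a : ℕ), h⟩) :=
          lt_of_le_of_ne (lam_nonneg X _) (Ne.symm h0)
        have hs : Real.sqrt (lam X (sig X ⟨(a : ℕ), h⟩)) ≠ 0 := by positivity
        rw [colSq_eq]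
        rw [Matrix.mulVec_smul, mulVec_y]
        rw [smul_smul, smul_dotProduct, dotProduct_smul, smul_eq_mul,
          smul_eq_mul, ev_dot, if_pos rfl]
        have := hsq (sig X ⟨(a : ℕ), h⟩)
        set t := lam X (sig X ⟨(a : ℕ), h⟩)
        field_simp
        exact (Real.sq_sqrt hpos.le).le
    · rw [sValSq_eq_zero X a h, dif_neg h, colSq_zero]

lemma sum_sVal_sq {m' n' : ℕ} (X : Matrix (Fin m') (Fin n') ℝ) (r : ℕ) :
    ∑ i ∈ Finset.range r, (sVal X i) ^ 2 = ∑ i ∈ Finset.range r, sValSq X i :=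
  Finset.sum_congr rfl fun i _ => Real.sq_sqrt (sValSq_nonneg X i)

theorem stmt_5 {k n D : ℕ} (Bs : Fin D → Matrix (Fin k) (Fin n) ℝ)
    (B : Matrix (Fin k) (Fin (D * n)) ℝ)
    (hB : ∀ (i : Fin k) (j : Fin (D * n)),
      B i j = Bs (finProdFinEquiv.symm j).1 i (finProdFinEquiv.symm j).2)
    (r : ℕ) (hr : 1 ≤ r) :
    ∑ d, (frobSq (Bs d) - ∑ i ∈ Finset.range r, (sVal (Bs d) i) ^ 2) ≤
      frobSq B - ∑ i ∈ Finset.range r, (sVal B i) ^ 2 := by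
  classical
  obtain ⟨u, δ, hδ, hu, hat⟩ := attain B r
  have hfs : frobSq B = ∑ d, frobSq (Bs d) := by
    have hrow : ∀ i, ∑ j, (B i j) ^ 2 = ∑ d, ∑ j : Fin n, (Bs d i j) ^ 2 := by
      intro i
      rw [← Equiv.sum_comp finProdFinEquiv (fun j => (B i j) ^ 2), Fintype.sum_prod_type]
      refine Finset.sum_congr rfl fun d _ => Finset.sum_congr rfl fun j _ => ?_
      rw [hB i (finProdFinEquiv (d, j)), Equiv.symm_apply_apply]
    calc frobSq B = ∑ i, ∑ d, ∑ j : Fin n, (Bs d i j) ^ 2 :=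
          Finset.sum_congr rfl fun i _ => hrow i
      _ = ∑ d, ∑ i, ∑ j : Fin n, (Bs d i j) ^ 2 := Finset.sum_comm
      _ = ∑ d, frobSq (Bs d) := rfl
  have hcol : ∀ a, colSq B (u a) = ∑ d, colSq (Bs d) (u a) := by
    intro a
    simp only [colSq]
    rw [← Equiv.sum_comp finProdFinEquiv
      (fun j => (∑ i, B i j * u a i) ^ 2), Fintype.sum_prod_type]
    refine Finset.sum_congr rfl fun d _ => Finset.sum_congr rfl fun j _ => ?_
    congr 1
    refine Finset.sum_congr rfl fun i _ => ?_
    rw [hB i (finProdFinEquiv (d, j)), Equiv.symm_apply_apply]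
  have hup : ∀ d, ∑ a, colSq (Bs d) (u a) ≤ ∑ i ∈ Finset.range r, sValSq (Bs d) i :=
    fun d => kyfan_upper (Bs d) u δ hδ hu
  have hmain : ∑ i ∈ Finset.range r, sValSq B i
      ≤ ∑ d, ∑ i ∈ Finset.range r, sValSq (Bs d) i := by
    calc ∑ i ∈ Finset.range r, sValSq B i ≤ ∑ a, colSq B (u a) := hat
      _ = ∑ a, ∑ d, colSq (Bs d) (u a) := Finset.sum_congr rfl fun a _ => hcol a
      _ = ∑ d, ∑ a, colSq (Bs d) (u a) := Finset.sum_comm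
      _ ≤ ∑ d, ∑ i ∈ Finset.range r, sValSq (Bs d) i :=
          Finset.sum_le_sum fun d _ => hup d
  rw [sum_sVal_sq B r, Finset.sum_congr rfl
    (fun d _ => by rw [sum_sVal_sq (Bs d) r]), Finset.sum_sub_distrib, hfs]
  linarith
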